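/- Let α be a real number with α ∉ ℤ and a : ℕ → ℝ. Then a belongs to the β-dual of c(Δ^(α)) if and only if (1) for every k the series R_k a = ∑_{j=k}^∞ (−1)^{j−k} Γ(−α+1)/((j−k)!·Γ(−α−j+k+1)) a_j converges and ∑_{k=0}^∞ |R_k a| < ∞, (2) sup_n ∑_{k=0}^{n} |w_{nk}| < ∞, and (3) the limit ρ = lim_{n→∞} ∑_{k=0}^{n} w_{nk} exists, where w_{nk} = ∑_{j=n}^∞ (−1)^{j−k} Γ(−α+1)/((j−k)!·Γ(−α−j+k+1)) a_j. Moreover, if a is in the β-dual then for every x ∈ c(Δ^(α)) one has ∑_{k=0}^∞ a_k x_k = ∑_{k=0}^∞ (R_k a)·(Δ^(α)x)_k − ρ·lim_{k→∞}(Δ^(α)x)_k. -/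

import Mathlib

open Filter Finset Topology

/-- The fractional difference matrix `Δ^(α)`. -/
noncomputable def fracDelta (α : ℝ) (n k : ℕ) : ℝ :=
  if k ≤ n then
    (-1 : ℝ) ^ (n - k) * Real.Gamma (α + 1) /
      ((Nat.factorial (n - k) : ℝ) * Real.Gamma (α - n + k + 1))
  else 0

/-- `(Δ^(α)x)_n = ∑_{k=0}^n Δ^(α)_{nk} x_k`. -/
noncomputable def fracDeltaSeq (α : ℝ) (x : ℕ → ℝ) (n : ℕ) : ℝ :=
  ∑ k ∈ Finset.range (n + 1), fracDelta α n k * x k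

/-- Membership in `c(Δ^(α))`. -/
def memCDelta (α : ℝ) (x : ℕ → ℝ) : Prop :=
  ∃ L : ℝ, Tendsto (fracDeltaSeq α x) atTop (nhds L)

/-- Classical convergence of the series `∑_{j=0}^∞ f j` to `L`. -/
def SeriesHasSum (f : ℕ → ℝ) (L : ℝ) : Prop :=
  Tendsto (fun m => ∑ j ∈ Finset.range m, f j) atTop (nhds L)

lemma fracDelta_of_lt {x : ℝ} {n k : ℕ} (h : n < k) : fracDelta x n k = 0 :=
  if_neg (not_le.mpr h)

lemma descPochhammer_smeval_succ (x : ℝ) (n : ℕ) :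
    (descPochhammer ℤ (n+1)).smeval x = (descPochhammer ℤ n).smeval x * (x - n) := by
  rw [descPochhammer_succ_right, Polynomial.smeval_mul]
  simp [Polynomial.smeval_sub, Polynomial.smeval_natCast]

lemma notInt_gamma_ne_zero {x : ℝ} (hx : ∀ m : ℤ, x ≠ m) : Real.Gamma x ≠ 0 :=
  Real.Gamma_ne_zero (fun m => by simpa using hx (-m))

lemma gamma_eq_desc (x : ℝ) (hx : ∀ m : ℤ, x ≠ m) (m : ℕ) :
    Real.Gamma (x + 1) = (descPochhammer ℤ m).smeval x * Real.Gamma (x - m + 1) := by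
  induction m with
  | zero => simp [descPochhammer_zero, Polynomial.smeval_one]
  | succ n ih =>
      have h1 : x - (n : ℝ) ≠ 0 := sub_ne_zero.mpr (hx n)
      have h2 : x - ((n+1 : ℕ) : ℝ) + 1 = x - n := by push_cast; ring
      rw [ih, descPochhammer_smeval_succ, h2, Real.Gamma_add_one h1]
      ring

lemma fracDelta_eq_choose {x : ℝ} (hx : ∀ m : ℤ, x ≠ m) {n k : ℕ} (h : k ≤ n) :
    fracDelta x n k = (-1 : ℝ) ^ (n - k) * Ring.choose x (n - k) := by
  set m := n - k with hm
  have hc : x - (n : ℝ) + k = x - (m : ℝ) := by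
    rw [hm, Nat.cast_sub h]; ring
  have hΓne : Real.Gamma (x - m + 1) ≠ 0 := by
    apply notInt_gamma_ne_zero
    intro j hEq
    exact hx (j + m - 1) (by push_cast; linarith)
  have hch : ((m.factorial : ℝ)) * Ring.choose x m = (descPochhammer ℤ m).smeval x := by
    rw [Ring.descPochhammer_eq_factorial_smul_choose, nsmul_eq_mul]
  have hfac : ((m.factorial : ℝ)) ≠ 0 := Nat.cast_ne_zero.mpr m.factorial_ne_zero
  unfold fracDelta
  rw [if_pos h, hc, gamma_eq_desc x hx m, ← hch]
  field_simp
  ring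

lemma choose_conv (β : ℝ) (M : ℕ) :
    ∑ m ∈ range (M + 1),
      ((-1:ℝ)^(M - m) * Ring.choose β (M - m)) * ((-1:ℝ)^m * Ring.choose (-β) m)
      = if M = 0 then 1 else 0 := by
  have h := Ring.add_choose_eq (R := ℝ) (r := -β) (s := β) M (Commute.all _ _)
  rw [neg_add_cancel, Ring.choose_zero_ite,
    Finset.Nat.sum_antidiagonal_eq_sum_range_succ_mk] at h
  have hterm : ∀ m ∈ range (M+1),
      ((-1:ℝ)^(M - m) * Ring.choose β (M - m)) * ((-1:ℝ)^m * Ring.choose (-β) m)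
      = (-1:ℝ)^M * (Ring.choose (-β) m * Ring.choose β (M - m)) := by
    intro m hm
    have hmM : m ≤ M := Nat.lt_succ_iff.mp (mem_range.mp hm)
    have : (-1:ℝ)^(M-m) * (-1:ℝ)^m = (-1:ℝ)^M := by
      rw [← pow_add, Nat.sub_add_cancel hmM]
    calc ((-1:ℝ)^(M - m) * Ring.choose β (M - m)) * ((-1:ℝ)^m * Ring.choose (-β) m)
        = ((-1:ℝ)^(M-m) * (-1:ℝ)^m) * (Ring.choose (-β) m * Ring.choose β (M - m)) := by ring
      _ = (-1:ℝ)^M * (Ring.choose (-β) m * Ring.choose β (M - m)) := by rw [this]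
  rw [Finset.sum_congr rfl hterm, ← Finset.mul_sum, ← h]
  rcases Nat.eq_zero_or_pos M with h0 | h0
  · simp [h0]
  · simp [Nat.pos_iff_ne_zero.mp h0]

lemma delta_mul_delta (β : ℝ) (hβ : ∀ m : ℤ, β ≠ m) (n k : ℕ) (hkn : k ≤ n) :
    ∑ j ∈ Icc k n, fracDelta β n j * fracDelta (-β) j k = if n = k then 1 else 0 := by
  have hβ' : ∀ m : ℤ, -β ≠ m := fun m h => hβ (-m) (by push_cast; linarith)
  rw [← Finset.Ico_add_one_right_eq_Icc, Finset.sum_Ico_eq_sum_range]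
  have hrange : n + 1 - k = (n - k) + 1 := by omega
  rw [hrange]
  have hterm : ∀ m ∈ range ((n-k) + 1),
      fracDelta β n (k + m) * fracDelta (-β) (k + m) k
      = ((-1:ℝ)^((n-k) - m) * Ring.choose β ((n-k) - m)) * ((-1:ℝ)^m * Ring.choose (-β) m) := by
    intro m hm
    have hmM : m ≤ n - k := Nat.lt_succ_iff.mp (mem_range.mp hm)
    have h1 : k + m ≤ n := by omega
    have h2 : k ≤ k + m := Nat.le_add_right _ _
    rw [fracDelta_eq_choose hβ h1, fracDelta_eq_choose hβ' h2]
    have e1 : n - (k + m) = (n - k) - m := by omega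
    have e2 : k + m - k = m := by omega
    rw [e1, e2]
  rw [Finset.sum_congr rfl hterm, choose_conv]
  have : n - k = 0 ↔ n = k := by omega
  rcases Nat.eq_zero_or_pos (n - k) with h0 | h0
  · simp [h0, this.mp h0]
  · have : n ≠ k := by omega
    simp [Nat.pos_iff_ne_zero.mp h0, this]

lemma delta_inv_apply (β : ℝ) (hβ : ∀ m : ℤ, β ≠ m) (u : ℕ → ℝ) (n : ℕ) :
    ∑ j ∈ range (n+1), fracDelta β n j *
      (∑ k ∈ range (j+1), fracDelta (-β) j k * u k) = u n := by
  have h1 : ∀ j ∈ range (n+1), fracDelta β n j * (∑ k ∈ range (j+1), fracDelta (-β) j k * u k)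
      = ∑ k ∈ range (n+1), fracDelta β n j * (fracDelta (-β) j k * u k) := by
    intro j hj
    rw [Finset.mul_sum]
    apply Finset.sum_subset
    · exact Finset.range_subset_range.mpr (by simp at hj; omega)
    · intro k hk hnk
      have : j < k := by simp at hk hnk; omega
      rw [fracDelta_of_lt this]; ring
  rw [Finset.sum_congr rfl h1, Finset.sum_comm]
  have h2 : ∀ k ∈ range (n+1), ∑ j ∈ range (n+1), fracDelta β n j * (fracDelta (-β) j k * u k)
      = (if n = k then 1 else 0) * u k := by
    intro k hk
    have hkn : k ≤ n := Nat.lt_succ_iff.mp (mem_range.mp hk)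
    have key : ∑ j ∈ range (n+1), fracDelta β n j * fracDelta (-β) j k
        = if n = k then 1 else 0 := by
      rw [← delta_mul_delta β hβ n k hkn]
      symm
      apply Finset.sum_subset
      · intro j hj; simp at hj ⊢; omega
      · intro j hj hnj
        have : j < k := by simp at hj hnj; omega
        rw [fracDelta_of_lt this]; ring
    calc ∑ j ∈ range (n+1), fracDelta β n j * (fracDelta (-β) j k * u k)
        = (∑ j ∈ range (n+1), fracDelta β n j * fracDelta (-β) j k) * u k := by
          rw [Finset.sum_mul]; exact Finset.sum_congr rfl (fun j _ => by ring)
      _ = (if n = k then 1 else 0) * u k := by rw [key]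
  rw [Finset.sum_congr rfl h2]
  simp

noncomputable def Pfun (α : ℝ) (a : ℕ → ℝ) (k m : ℕ) : ℝ :=
  ∑ i ∈ Finset.range m, if k ≤ i then fracDelta (-α) i k * a i else 0

lemma Pfun_self (α : ℝ) (a : ℕ → ℝ) (k : ℕ) : Pfun α a k k = 0 :=
  Finset.sum_eq_zero (fun i hi => if_neg (by simp at hi; omega))

lemma shift_sum (α : ℝ) (a : ℕ → ℝ) (k n m : ℕ) (hk : k ≤ n) :
    ∑ j ∈ range m, fracDelta (-α) (n+j) k * a (n+j) = Pfun α a k (n+m) - Pfun α a k n := by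
  rw [Pfun, Pfun, ← Finset.sum_Ico_eq_sub _ (Nat.le_add_right n m), Finset.sum_Ico_eq_sum_range]
  have h : n + m - n = m := by omega
  rw [h]
  apply Finset.sum_congr rfl
  intro j _
  rw [if_pos (le_trans hk (Nat.le_add_right n j))]

lemma seriesW_iff (α : ℝ) (a : ℕ → ℝ) (k n : ℕ) (hk : k ≤ n) (c : ℝ) :
    SeriesHasSum (fun j => fracDelta (-α) (n + j) k * a (n + j)) c ↔
      Tendsto (Pfun α a k) atTop (nhds (c + Pfun α a k n)) := by
  unfold SeriesHasSum
  have he : (fun m => ∑ j ∈ range m, fracDelta (-α) (n+j) k * a (n+j))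
      = fun m => Pfun α a k (n+m) - Pfun α a k n := funext (fun m => shift_sum α a k n m hk)
  rw [he]
  have hswap : (fun m => Pfun α a k (n+m)) = (fun m => Pfun α a k (m+n)) :=
    funext fun m => by rw [add_comm]
  constructor
  · intro h
    have h2 : Tendsto (fun m => Pfun α a k (n+m)) atTop (nhds (c + Pfun α a k n)) := by
      have := h.add_const (Pfun α a k n)
      simpa using this
    rw [hswap] at h2
    exact (tendsto_add_atTop_iff_nat n).mp h2
  · intro h
    have h2 := (tendsto_add_atTop_iff_nat n).mpr h
    rw [← hswap] at h2
    have := h2.sub_const (Pfun α a k n)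
    simpa using this

lemma seriesR_iff (α : ℝ) (a : ℕ → ℝ) (k : ℕ) (c : ℝ) :
    SeriesHasSum (fun j => fracDelta (-α) (k + j) k * a (k + j)) c ↔
      Tendsto (Pfun α a k) atTop (nhds c) := by
  have := seriesW_iff α a k k le_rfl c
  rwa [Pfun_self, add_zero] at this

lemma sum_tri (m : ℕ) (f : ℕ → ℕ → ℝ) :
    ∑ k ∈ range m, ∑ j ∈ range (k+1), f k j
      = ∑ j ∈ range m, ∑ k ∈ range m, if j ≤ k then f k j else 0 := by
  rw [Finset.sum_comm]
  apply Finset.sum_congr rfl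
  intro k hk
  have hk' : k < m := mem_range.mp hk
  rw [← Finset.sum_filter]
  apply Finset.sum_congr ?_ (fun _ _ => rfl)
  ext j
  simp only [Finset.mem_range, Finset.mem_filter]
  omega

lemma key_id (α : ℝ) (a y : ℕ → ℝ) (m : ℕ) :
    ∑ k ∈ range m, a k * (∑ j ∈ range (k+1), fracDelta (-α) k j * y j)
      = ∑ j ∈ range m, Pfun α a j m * y j := by
  have h1 : ∀ k ∈ range m, a k * (∑ j ∈ range (k+1), fracDelta (-α) k j * y j)
      = ∑ j ∈ range (k+1), a k * (fracDelta (-α) k j * y j) := fun k _ => Finset.mul_sum _ _ _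
  rw [Finset.sum_congr rfl h1, sum_tri]
  apply Finset.sum_congr rfl
  intro j _
  rw [Pfun, Finset.sum_mul]
  apply Finset.sum_congr rfl
  intro i _
  rw [ite_mul, zero_mul]
  by_cases h : j ≤ i
  · rw [if_pos h, if_pos h]; ring
  · rw [if_neg h, if_neg h]

lemma toeplitz_null (T : ℕ → ℕ → ℝ) (z : ℕ → ℝ) (C : ℝ)
    (hbd : ∀ m, ∑ j ∈ range m, |T m j| ≤ C)
    (hcol : ∀ j, Tendsto (fun m => T m j) atTop (nhds 0))
    (hz : Tendsto z atTop (nhds 0)) :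
    Tendsto (fun m => ∑ j ∈ range m, T m j * z j) atTop (nhds 0) := by
  obtain ⟨D₀, hD₀⟩ : ∃ D, ∀ j, |z j| ≤ D := by
    obtain ⟨D, hD⟩ := hz.abs.bddAbove_range
    exact ⟨D, fun j => hD ⟨j, rfl⟩⟩
  have hD0 : 0 ≤ D₀ := le_trans (abs_nonneg _) (hD₀ 0)
  set D := D₀ + 1 with hDdef
  have hD1 : 0 < D := by simp only [hDdef]; linarith
  have hD : ∀ j, |z j| ≤ D := fun j => (hD₀ j).trans (by simp only [hDdef]; linarith)
  have hC0 : 0 ≤ C := by have := hbd 0; simpa using this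
  rw [Metric.tendsto_atTop]
  intro ε hε
  set ε₁ := ε / (2 * (C + 1)) with hε₁def
  have hε₁ : 0 < ε₁ := by rw [hε₁def]; positivity
  obtain ⟨N₁, hN₁⟩ := (Metric.tendsto_atTop.mp hz) ε₁ hε₁
  have hg : Tendsto (fun m => ∑ j ∈ range N₁, |T m j|) atTop (nhds 0) := by
    have : Tendsto (fun m => ∑ j ∈ range N₁, |T m j|) atTop (nhds (∑ j ∈ range N₁, |(0:ℝ)|)) :=
      tendsto_finset_sum _ (fun j _ => (hcol j).abs)
    simpa using this
  obtain ⟨N₂, hN₂⟩ := (Metric.tendsto_atTop.mp hg) (ε / (2 * D)) (by positivity)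
  refine ⟨max N₁ N₂, fun m hm => ?_⟩
  have hm1 : N₁ ≤ m := le_trans (le_max_left _ _) hm
  have hm2 : N₂ ≤ m := le_trans (le_max_right _ _) hm
  rw [Real.dist_eq, sub_zero]
  have hsplit : ∑ j ∈ range m, |T m j| * |z j|
      = (∑ j ∈ range N₁, |T m j| * |z j|) + ∑ j ∈ Ico N₁ m, |T m j| * |z j| := by
    rw [range_eq_Ico, ← Finset.sum_Ico_consecutive _ (Nat.zero_le N₁) hm1, ← range_eq_Ico]
  have h1 : ∑ j ∈ range N₁, |T m j| * |z j| ≤ (∑ j ∈ range N₁, |T m j|) * D := by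
    rw [Finset.sum_mul]
    exact Finset.sum_le_sum fun j _ => mul_le_mul_of_nonneg_left (hD j) (abs_nonneg _)
  have hgm : ∑ j ∈ range N₁, |T m j| < ε / (2*D) := by
    have := hN₂ m hm2
    rwa [Real.dist_eq, sub_zero,
      abs_of_nonneg (Finset.sum_nonneg fun _ _ => abs_nonneg _)] at this
  have h2 : ∑ j ∈ Ico N₁ m, |T m j| * |z j| ≤ C * ε₁ := by
    calc ∑ j ∈ Ico N₁ m, |T m j| * |z j| ≤ ∑ j ∈ Ico N₁ m, |T m j| * ε₁ := by
          apply Finset.sum_le_sum; intro j hj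
          have hj1 : N₁ ≤ j := (Finset.mem_Ico.mp hj).1
          have := hN₁ j hj1
          rw [Real.dist_eq, sub_zero] at this
          exact mul_le_mul_of_nonneg_left (le_of_lt this) (abs_nonneg _)
      _ = (∑ j ∈ Ico N₁ m, |T m j|) * ε₁ := by rw [Finset.sum_mul]
      _ ≤ C * ε₁ := by
          apply mul_le_mul_of_nonneg_right ?_ (le_of_lt hε₁)
          calc ∑ j ∈ Ico N₁ m, |T m j| ≤ ∑ j ∈ range m, |T m j| :=
                Finset.sum_le_sum_of_subset_of_nonneg
                  (by rw [range_eq_Ico]; exact Finset.Ico_subset_Ico (Nat.zero_le _) le_rfl)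
                  (fun _ _ _ => abs_nonneg _)
            _ ≤ C := hbd m
  have e1 : (ε/(2*D)) * D = ε/2 := by field_simp
  have e2 : C * ε₁ ≤ ε/2 := by
    have h3 : C * (ε/(2*(C+1))) ≤ (C+1) * (ε/(2*(C+1))) :=
      mul_le_mul_of_nonneg_right (by linarith) (by positivity)
    have e3 : (C+1) * (ε/(2*(C+1))) = ε/2 := by field_simp
    rw [hε₁def]; linarith
  calc |∑ j ∈ range m, T m j * z j| ≤ ∑ j ∈ range m, |T m j * z j| := Finset.abs_sum_le_sum_abs _ _
    _ = ∑ j ∈ range m, |T m j| * |z j| := by simp [abs_mul]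
    _ = _ := hsplit
    _ ≤ (∑ j ∈ range N₁, |T m j|) * D + C * ε₁ := add_le_add h1 h2
    _ < (ε/(2*D)) * D + C * ε₁ := by nlinarith
    _ ≤ ε/2 + ε/2 := by rw [e1]; linarith
    _ = ε := by ring

lemma Wsum_tendsto (W : ℕ → ℕ → ℝ) (y : ℕ → ℝ) (ξ ρ C : ℝ)
    (hbd : ∀ n, ∑ k ∈ range (n+1), |W n k| ≤ C)
    (hcol : ∀ j, Tendsto (fun m => W m j) atTop (nhds 0))
    (hdiag : Tendsto (fun m => W m m) atTop (nhds 0))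
    (hρ : Tendsto (fun n => ∑ k ∈ range (n+1), W n k) atTop (nhds ρ))
    (hy : Tendsto y atTop (nhds ξ)) :
    Tendsto (fun m => ∑ j ∈ range m, W m j * y j) atTop (nhds (ρ * ξ)) := by
  have hbd' : ∀ m, ∑ j ∈ range m, |W m j| ≤ C := fun m =>
    le_trans (Finset.sum_le_sum_of_subset_of_nonneg (Finset.range_subset_range.mpr (Nat.le_succ m))
      (fun _ _ _ => abs_nonneg _)) (hbd m)
  have h1 : Tendsto (fun m => ∑ j ∈ range m, W m j * (y j - ξ)) atTop (nhds 0) :=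
    toeplitz_null W (fun j => y j - ξ) C hbd' hcol (by simpa using hy.sub_const ξ)
  have h2 : Tendsto (fun m => ∑ j ∈ range m, W m j) atTop (nhds ρ) := by
    have he : (fun m => ∑ j ∈ range m, W m j)
        = fun m => (∑ j ∈ range (m+1), W m j) - W m m := by
      funext m; rw [Finset.sum_range_succ]; ring
    rw [he]
    simpa using hρ.sub hdiag
  have h3 := h1.add (h2.mul_const ξ)
  rw [zero_add] at h3
  refine h3.congr (fun m => ?_)
  rw [Finset.sum_mul, ← Finset.sum_add_distrib]
  apply Finset.sum_congr rfl
  intro j _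
  ring

open ZeroAtInfty in
noncomputable def gfun (α : ℝ) (a : ℕ → ℝ) (m : ℕ) : C₀(ℕ, ℝ) →L[ℝ] ℝ :=
  LinearMap.mkContinuous
    { toFun := fun f => ∑ j ∈ Finset.range m, Pfun α a j m * f j
      map_add' := by intro f g; simp [mul_add, Finset.sum_add_distrib]
      map_smul' := by
        intro r f; simp only [Finset.mul_sum, RingHom.id_apply, smul_eq_mul]
        apply Finset.sum_congr rfl; intros; simp; ring }
    (∑ j ∈ Finset.range m, |Pfun α a j m|)
    (by
      intro f
      simp only [LinearMap.coe_mk, AddHom.coe_mk]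
      calc ‖∑ j ∈ range m, Pfun α a j m * f j‖ ≤ ∑ j ∈ range m, ‖Pfun α a j m * f j‖ :=
            norm_sum_le _ _
        _ ≤ ∑ j ∈ range m, |Pfun α a j m| * ‖f‖ := by
            apply Finset.sum_le_sum; intro j _
            rw [norm_mul]
            exact mul_le_mul_of_nonneg_left (by
              rw [← ZeroAtInftyContinuousMap.norm_toBCF_eq_norm]
              exact f.toBCF.norm_coe_le_norm j) (abs_nonneg _)
        _ = (∑ j ∈ range m, |Pfun α a j m|) * ‖f‖ := by rw [Finset.sum_mul])

open ZeroAtInfty in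
lemma gfun_apply (α : ℝ) (a : ℕ → ℝ) (m : ℕ) (f : C₀(ℕ, ℝ)) :
    gfun α a m f = ∑ j ∈ Finset.range m, Pfun α a j m * f j := rfl

open ZeroAtInfty in
noncomputable def mkC0 (f : ℕ → ℝ) (hf : Tendsto f atTop (nhds 0)) : C₀(ℕ, ℝ) :=
  ⟨⟨f, continuous_of_discreteTopology⟩, by rwa [cocompact_eq_atTop (α := ℕ)]⟩

open ZeroAtInfty in
lemma mkC0_apply (f : ℕ → ℝ) (hf : Tendsto f atTop (nhds 0)) (n : ℕ) : mkC0 f hf n = f n := rfl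

open ZeroAtInfty in
lemma row_bound (α : ℝ) (a : ℕ → ℝ) (m : ℕ) (C : ℝ) (h : ‖gfun α a m‖ ≤ C) :
    ∑ j ∈ Finset.range m, |Pfun α a j m| ≤ C := by
  set f0 : ℕ → ℝ := fun j => if j < m then (if Pfun α a j m < 0 then -1 else 1) else 0 with hf0
  have hf0t : Tendsto f0 atTop (nhds 0) := by
    apply Tendsto.congr' _ tendsto_const_nhds
    filter_upwards [eventually_ge_atTop m] with j hj
    simp only [hf0]
    rw [if_neg (by omega)]
  set F : C₀(ℕ, ℝ) := mkC0 f0 hf0t with hF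
  have hFn : ‖F‖ ≤ 1 := by
    rw [← ZeroAtInftyContinuousMap.norm_toBCF_eq_norm]
    apply (BoundedContinuousFunction.norm_le zero_le_one).mpr
    intro j
    have he : F.toBCF j = f0 j := rfl
    rw [he, Real.norm_eq_abs]
    simp only [hf0]
    split_ifs <;> simp
  have hval : gfun α a m F = ∑ j ∈ Finset.range m, |Pfun α a j m| := by
    rw [gfun_apply]
    apply Finset.sum_congr rfl
    intro j hj
    have hjm : j < m := Finset.mem_range.mp hj
    have heF : (F : ℕ → ℝ) j = f0 j := rfl
    rw [heF]
    simp only [hf0]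
    rw [if_pos hjm]
    by_cases hP : Pfun α a j m < 0
    · rw [if_pos hP, abs_of_neg hP]; ring
    · rw [if_neg hP, abs_of_nonneg (not_lt.mp hP)]; ring
  calc ∑ j ∈ Finset.range m, |Pfun α a j m| = gfun α a m F := hval.symm
    _ ≤ ‖gfun α a m F‖ := le_abs_self _
    _ ≤ ‖gfun α a m‖ * ‖F‖ := (gfun α a m).le_opNorm F
    _ ≤ C * 1 := mul_le_mul h hFn (norm_nonneg F) (le_trans (norm_nonneg (gfun α a m)) h)
    _ = C := mul_one C

lemma col_seq (α : ℝ) (hα : ∀ m : ℤ, α ≠ (m : ℝ)) (k : ℕ) :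
    fracDeltaSeq α (fun n => fracDelta (-α) n k) = fun n => if n = k then 1 else 0 := by
  funext n
  unfold fracDeltaSeq
  by_cases hkn : k ≤ n
  · rw [← delta_mul_delta α hα n k hkn]
    symm
    apply Finset.sum_subset
    · intro j hj; simp at hj ⊢; omega
    · intro j hj hnj
      have : j < k := by simp at hj hnj; omega
      rw [fracDelta_of_lt this, mul_zero]
  · have hnk : n < k := not_le.mp hkn
    rw [if_neg (by omega)]
    apply Finset.sum_eq_zero
    intro j hj
    have : j < k := by simp at hj; omega
    show fracDelta α n j * fracDelta (-α) j k = 0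
    rw [fracDelta_of_lt this, mul_zero]

lemma Ainv_seq (α : ℝ) (hα : ∀ m : ℤ, α ≠ (m : ℝ)) (y : ℕ → ℝ) :
    fracDeltaSeq α (fun n => ∑ j ∈ Finset.range (n+1), fracDelta (-α) n j * y j) = y := by
  funext n
  exact delta_inv_apply α hα y n

lemma partial_eq (α : ℝ) (a y : ℕ → ℝ) (m : ℕ) :
    ∑ k ∈ Finset.range m, a k * (∑ j ∈ Finset.range (k+1), fracDelta (-α) k j * y j)
      = ∑ j ∈ Finset.range m, Pfun α a j m * y j := key_id α a y m

open ZeroAtInfty in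
lemma fwd (α : ℝ) (hα : ∀ m : ℤ, α ≠ (m : ℝ)) (a : ℕ → ℝ)
    (hyp : ∀ x : ℕ → ℝ, memCDelta α x → ∃ L : ℝ, SeriesHasSum (fun k => a k * x k) L) :
    (∀ k, ∃ c, Tendsto (Pfun α a k) atTop (nhds c)) ∧
    (∃ C', 0 ≤ C' ∧ ∀ m, ∑ j ∈ Finset.range m, |Pfun α a j m| ≤ C') ∧
    (∃ L₁, Tendsto (fun m => ∑ j ∈ Finset.range m, Pfun α a j m) atTop (nhds L₁)) := by
  refine ⟨?_, ?_, ?_⟩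
  · -- columns converge
    intro k
    have hmem : memCDelta α (fun n => fracDelta (-α) n k) := by
      refine ⟨0, ?_⟩
      rw [col_seq α hα k]
      apply Tendsto.congr' _ tendsto_const_nhds
      filter_upwards [eventually_ge_atTop (k+1)] with n hn
      rw [if_neg (by omega)]
    obtain ⟨L, hL⟩ := hyp _ hmem
    refine ⟨L, ?_⟩
    unfold SeriesHasSum at hL
    apply hL.congr
    intro m
    unfold Pfun
    apply Finset.sum_congr rfl
    intro i _
    show a i * fracDelta (-α) i k = if k ≤ i then fracDelta (-α) i k * a i else 0
    by_cases h : k ≤ i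
    · rw [if_pos h]; ring
    · rw [if_neg h, fracDelta_of_lt (not_le.mp h), mul_zero]
  · -- uniform row bound via Banach–Steinhaus
    have hpt : ∀ f : C₀(ℕ, ℝ), ∃ C, ∀ m, ‖gfun α a m f‖ ≤ C := by
      intro f
      set y : ℕ → ℝ := fun n => f n with hy
      have hy0 : Tendsto y atTop (nhds 0) := by
        have := zero_at_infty (f : C₀(ℕ, ℝ))
        rwa [cocompact_eq_atTop (α := ℕ)] at this
      set x : ℕ → ℝ := fun n => ∑ j ∈ Finset.range (n+1), fracDelta (-α) n j * y j with hx
      have hmem : memCDelta α x := ⟨0, by rw [hx, Ainv_seq α hα y]; exact hy0⟩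
      obtain ⟨L, hL⟩ := hyp x hmem
      unfold SeriesHasSum at hL
      have heq : (fun m => ∑ k ∈ Finset.range m, a k * x k) = fun m => gfun α a m f := by
        funext m
        rw [gfun_apply, hx, ← partial_eq α a y m]
      rw [heq] at hL
      have hb : BddAbove (Set.range fun m => ‖gfun α a m f‖) := by
        simpa [Real.norm_eq_abs] using hL.abs.bddAbove_range
      obtain ⟨C, hC⟩ := hb
      exact ⟨C, fun m => hC ⟨m, rfl⟩⟩
    obtain ⟨C', hC'⟩ := banach_steinhaus hpt
    refine ⟨C', le_trans (norm_nonneg (gfun α a 0)) (hC' 0), fun m => row_bound α a m C' (hC' m)⟩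
  · -- row sums converge
    set y : ℕ → ℝ := fun _ => 1 with hy
    set x : ℕ → ℝ := fun n => ∑ j ∈ Finset.range (n+1), fracDelta (-α) n j * y j with hx
    have hmem : memCDelta α x := ⟨1, by rw [hx, Ainv_seq α hα y]; exact tendsto_const_nhds⟩
    obtain ⟨L, hL⟩ := hyp x hmem
    unfold SeriesHasSum at hL
    refine ⟨L, hL.congr (fun m => ?_)⟩
    rw [hx, partial_eq α a y m]
    simp [hy]

lemma combined (α : ℝ) (hα' : ∀ m : ℤ, -α ≠ (m : ℝ)) (a R : ℕ → ℝ) (W : ℕ → ℕ → ℝ)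
    (ρ ξ C : ℝ) (x : ℕ → ℝ)
    (hR : ∀ k, Tendsto (Pfun α a k) atTop (nhds (R k)))
    (hRC : ∀ m, ∑ k ∈ range m, |R k| ≤ C)
    (hWdef : ∀ n k, k ≤ n → W n k = R k - Pfun α a k n)
    (hWC : ∀ n, ∑ k ∈ range (n+1), |W n k| ≤ C)
    (hρ : Tendsto (fun n => ∑ k ∈ range (n+1), W n k) atTop (nhds ρ))
    (hξ : Tendsto (fracDeltaSeq α x) atTop (nhds ξ)) :
    Tendsto (fun m => ∑ j ∈ range m, W m j * fracDeltaSeq α x j) atTop (nhds (ρ * ξ)) ∧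
    (∀ m, ∑ k ∈ range m, a k * x k
        = ∑ j ∈ range m, R j * fracDeltaSeq α x j - ∑ j ∈ range m, W m j * fracDeltaSeq α x j) ∧
    Summable (fun j => R j * fracDeltaSeq α x j) := by
  set y := fracDeltaSeq α x with hy
  have hcol : ∀ j, Tendsto (fun m => W m j) atTop (nhds 0) := by
    intro j
    have ht : Tendsto (fun m => R j - Pfun α a j m) atTop (nhds 0) := by
      have := (tendsto_const_nhds (x := R j)).sub (hR j)
      simpa using this
    apply ht.congr'
    filter_upwards [eventually_ge_atTop j] with m hm
    exact (hWdef m j hm).symm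
  have hsabs : Summable (fun k => |R k|) :=
    summable_of_sum_range_le (fun _ => abs_nonneg _) hRC
  have hR0 : Tendsto R atTop (nhds 0) := (hsabs.of_abs).tendsto_atTop_zero
  have hdiag : Tendsto (fun m => W m m) atTop (nhds 0) := by
    apply hR0.congr
    intro m
    rw [hWdef m m le_rfl, Pfun_self, sub_zero]
  have hB := Wsum_tendsto W y ξ ρ C hWC hcol hdiag hρ hξ
  have hxy : ∀ k, x k = ∑ j ∈ range (k+1), fracDelta (-α) k j * y j := by
    intro k
    have h := delta_inv_apply (-α) hα' x k
    rw [neg_neg] at h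
    rw [← h]
    apply Finset.sum_congr rfl
    intro j _
    rfl
  have hid : ∀ m, ∑ k ∈ range m, a k * x k
      = ∑ j ∈ range m, R j * y j - ∑ j ∈ range m, W m j * y j := by
    intro m
    have h1 : ∑ k ∈ range m, a k * x k = ∑ j ∈ range m, Pfun α a j m * y j := by
      rw [← key_id α a y m]
      exact Finset.sum_congr rfl (fun k _ => by rw [hxy k])
    rw [h1, ← Finset.sum_sub_distrib]
    apply Finset.sum_congr rfl
    intro j hj
    have hjm : j ≤ m := le_of_lt (Finset.mem_range.mp hj)
    rw [hWdef m j hjm]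
    ring
  refine ⟨hB, hid, ?_⟩
  obtain ⟨D, hD⟩ : ∃ D, ∀ j, |y j| ≤ D := by
    obtain ⟨D, hD⟩ := hξ.abs.bddAbove_range
    exact ⟨D, fun j => hD ⟨j, rfl⟩⟩
  apply Summable.of_abs
  apply Summable.of_nonneg_of_le (fun j => abs_nonneg _) (fun j => ?_) (hsabs.mul_right D)
  rw [abs_mul]
  exact mul_le_mul_of_nonneg_left (hD j) (abs_nonneg _)

lemma Rbound (α : ℝ) (a R : ℕ → ℝ) (C' : ℝ)
    (hR : ∀ k, Tendsto (Pfun α a k) atTop (nhds (R k)))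
    (hC' : ∀ m, ∑ j ∈ Finset.range m, |Pfun α a j m| ≤ C') :
    ∀ m, ∑ k ∈ Finset.range m, |R k| ≤ C' := by
  intro m
  have ht : Tendsto (fun M => ∑ k ∈ Finset.range m, |Pfun α a k M|) atTop
      (nhds (∑ k ∈ Finset.range m, |R k|)) :=
    tendsto_finset_sum _ (fun k _ => (hR k).abs)
  apply le_of_tendsto ht
  filter_upwards [eventually_ge_atTop m] with M hM
  calc ∑ k ∈ Finset.range m, |Pfun α a k M| ≤ ∑ k ∈ Finset.range M, |Pfun α a k M| :=
        Finset.sum_le_sum_of_subset_of_nonneg (Finset.range_subset_range.mpr hM)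
          (fun _ _ _ => abs_nonneg _)
    _ ≤ C' := hC' M

lemma Wbound (α : ℝ) (a R : ℕ → ℝ) (C' : ℝ)
    (hRC : ∀ m, ∑ k ∈ Finset.range m, |R k| ≤ C')
    (hC' : ∀ m, ∑ j ∈ Finset.range m, |Pfun α a j m| ≤ C') :
    ∀ n, ∑ k ∈ Finset.range (n+1), |R k - Pfun α a k n| ≤ 2*C' := by
  intro n
  have hP : ∑ k ∈ Finset.range (n+1), |Pfun α a k n| ≤ C' := by
    rw [Finset.sum_range_succ, Pfun_self, abs_zero, add_zero]
    exact hC' n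
  calc ∑ k ∈ Finset.range (n+1), |R k - Pfun α a k n|
      ≤ ∑ k ∈ Finset.range (n+1), (|R k| + |Pfun α a k n|) :=
        Finset.sum_le_sum (fun k _ => abs_sub (R k) _)
    _ = (∑ k ∈ Finset.range (n+1), |R k|) + ∑ k ∈ Finset.range (n+1), |Pfun α a k n| :=
        Finset.sum_add_distrib
    _ ≤ C' + C' := add_le_add (hRC (n+1)) hP
    _ = 2*C' := by ring

/-- Characterization of the β-dual of `c(Δ^(α))`:
`a ∈ (c(Δ^(α)))^β` iff the series `R_k a` converge with `∑_k |R_k a| < ∞`,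
`sup_n ∑_{k=0}^n |w_{nk}| < ∞`, and `ρ = lim_n ∑_{k=0}^n w_{nk}` exists; moreover, in this case
`∑_k a_k x_k = ∑_k (R_k a)(Δ^(α)x)_k − ρ·lim_k (Δ^(α)x)_k` for every `x ∈ c(Δ^(α))`. -/
theorem betaDual_cDelta (α : ℝ) (hα : ∀ m : ℤ, α ≠ (m : ℝ)) (a : ℕ → ℝ) :
    ((∀ x : ℕ → ℝ, memCDelta α x → ∃ L : ℝ, SeriesHasSum (fun k => a k * x k) L) ↔
      (∃ R : ℕ → ℝ,
        (∀ k, SeriesHasSum (fun j => fracDelta (-α) (k + j) k * a (k + j)) (R k)) ∧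
        (∃ C : ℝ, ∀ m, ∑ k ∈ Finset.range m, |R k| ≤ C)) ∧
      (∃ W : ℕ → ℕ → ℝ,
        (∀ n k, k ≤ n → SeriesHasSum (fun j => fracDelta (-α) (n + j) k * a (n + j)) (W n k)) ∧
        (∃ C : ℝ, ∀ n, ∑ k ∈ Finset.range (n + 1), |W n k| ≤ C) ∧
        (∃ ρ : ℝ, Tendsto (fun n => ∑ k ∈ Finset.range (n + 1), W n k) atTop (nhds ρ)))) ∧
    ((∀ x : ℕ → ℝ, memCDelta α x → ∃ L : ℝ, SeriesHasSum (fun k => a k * x k) L) →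
      ∀ x : ℕ → ℝ, memCDelta α x →
        ∀ R : ℕ → ℝ,
          (∀ k, SeriesHasSum (fun j => fracDelta (-α) (k + j) k * a (k + j)) (R k)) →
        ∀ W : ℕ → ℕ → ℝ,
          (∀ n k, k ≤ n → SeriesHasSum (fun j => fracDelta (-α) (n + j) k * a (n + j)) (W n k)) →
        ∀ ρ : ℝ, Tendsto (fun n => ∑ k ∈ Finset.range (n + 1), W n k) atTop (nhds ρ) →
        ∀ ξ : ℝ, Tendsto (fracDeltaSeq α x) atTop (nhds ξ) →
        ∀ L : ℝ, SeriesHasSum (fun k => a k * x k) L →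
          SeriesHasSum (fun k => R k * fracDeltaSeq α x k) (L + ρ * ξ)) := by
  have hα' : ∀ m : ℤ, -α ≠ (m : ℝ) := fun m h => hα (-m) (by push_cast; linarith)
  constructor
  · constructor
    · intro hyp
      obtain ⟨hcols, ⟨C', hC'0, hC'⟩, ⟨L₁, hL₁⟩⟩ := fwd α hα a hyp
      choose R hR using hcols
      have hRC : ∀ m, ∑ k ∈ Finset.range m, |R k| ≤ C' := Rbound α a R C' hR hC'
      have hsabs : Summable (fun k => |R k|) :=
        summable_of_sum_range_le (fun _ => abs_nonneg _) hRC
      refine ⟨⟨R, fun k => (seriesR_iff α a k (R k)).mpr (hR k), ⟨C', hRC⟩⟩,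
        ⟨fun n k => R k - Pfun α a k n, ?_, ⟨2*C', Wbound α a R C' hRC hC'⟩, ?_⟩⟩
      · intro n k hk
        apply (seriesW_iff α a k n hk _).mpr
        have he : R k - Pfun α a k n + Pfun α a k n = R k := by ring
        rw [he]
        exact hR k
      · refine ⟨(∑' k, R k) - L₁, ?_⟩
        have hts : Tendsto (fun n => ∑ k ∈ Finset.range (n+1), R k) atTop (nhds (∑' k, R k)) :=
          ((hsabs.of_abs).hasSum.tendsto_sum_nat).comp (tendsto_add_atTop_nat 1)
        have hL₁' : Tendsto (fun n => ∑ k ∈ Finset.range (n+1), Pfun α a k n) atTop (nhds L₁) := by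
          apply hL₁.congr
          intro n
          rw [Finset.sum_range_succ, Pfun_self, add_zero]
        have hsub := hts.sub hL₁'
        apply hsub.congr
        intro n
        rw [← Finset.sum_sub_distrib]
    · rintro ⟨⟨R, hRs, C₁, hRC⟩, ⟨W, hWs, ⟨C₂, hWC⟩, ⟨ρ, hρ⟩⟩⟩ x hx
      obtain ⟨ξ, hξ⟩ := hx
      have hR : ∀ k, Tendsto (Pfun α a k) atTop (nhds (R k)) :=
        fun k => (seriesR_iff α a k (R k)).mp (hRs k)
      have hWdef : ∀ n k, k ≤ n → W n k = R k - Pfun α a k n := by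
        intro n k hk
        have h1 := (seriesW_iff α a k n hk (W n k)).mp (hWs n k hk)
        have h2 := tendsto_nhds_unique h1 (hR k)
        linarith
      have hRC' : ∀ m, ∑ k ∈ Finset.range m, |R k| ≤ max C₁ C₂ :=
        fun m => le_trans (hRC m) (le_max_left _ _)
      have hWC' : ∀ n, ∑ k ∈ Finset.range (n+1), |W n k| ≤ max C₁ C₂ :=
        fun n => le_trans (hWC n) (le_max_right _ _)
      obtain ⟨hB, hid, hsum⟩ := combined α hα' a R W ρ ξ (max C₁ C₂) x hR hRC' hWdef hWC' hρ hξ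
      refine ⟨(∑' j, R j * fracDeltaSeq α x j) - ρ * ξ, ?_⟩
      unfold SeriesHasSum
      have hA := hsum.hasSum.tendsto_sum_nat
      have hsub := hA.sub hB
      apply hsub.congr
      intro m
      show (∑ j ∈ Finset.range m, R j * fracDeltaSeq α x j)
          - ∑ j ∈ Finset.range m, W m j * fracDeltaSeq α x j
          = ∑ j ∈ Finset.range m, a j * x j
      have := hid m
      linarith
  · intro hyp x hx R hRs W hWs ρ hρ ξ hξ L hL
    obtain ⟨_, ⟨C', hC'0, hC'⟩, _⟩ := fwd α hα a hyp
    have hR : ∀ k, Tendsto (Pfun α a k) atTop (nhds (R k)) :=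
      fun k => (seriesR_iff α a k (R k)).mp (hRs k)
    have hRC : ∀ m, ∑ k ∈ Finset.range m, |R k| ≤ C' := Rbound α a R C' hR hC'
    have hWdef : ∀ n k, k ≤ n → W n k = R k - Pfun α a k n := by
      intro n k hk
      have h1 := (seriesW_iff α a k n hk (W n k)).mp (hWs n k hk)
      have h2 := tendsto_nhds_unique h1 (hR k)
      linarith
    have hWC : ∀ n, ∑ k ∈ Finset.range (n+1), |W n k| ≤ 2*C' := by
      intro n
      have he : ∑ k ∈ Finset.range (n+1), |W n k|
          = ∑ k ∈ Finset.range (n+1), |R k - Pfun α a k n| :=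
        Finset.sum_congr rfl (fun k hk => by
          rw [hWdef n k (Nat.lt_succ_iff.mp (Finset.mem_range.mp hk))])
      rw [he]
      exact Wbound α a R C' hRC hC' n
    have hRC2 : ∀ m, ∑ k ∈ Finset.range m, |R k| ≤ 2*C' :=
      fun m => le_trans (hRC m) (by linarith)
    obtain ⟨hB, hid, _⟩ := combined α hα' a R W ρ ξ (2*C') x hR hRC2 hWdef hWC hρ hξ
    unfold SeriesHasSum at hL ⊢
    have hsum := hL.add hB
    apply hsum.congr
    intro m
    show (∑ j ∈ Finset.range m, a j * x j)
        + ∑ j ∈ Finset.range m, W m j * fracDeltaSeq α x j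
        = ∑ j ∈ Finset.range m, R j * fracDeltaSeq α x j
    have := hid m
    linarith
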